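/- Assume β ∈ [0,1] and M > 6. There exists a constant C > 0 (depending only on β and M) such that for all ω₁ > 1 one has C₃²³⁴[n⁰¹, n⁰¹, n⁰¹](ω₁) ≤ C · ω₁^{2β + 1/2 − M/2}. -/

import Mathlib

open MeasureTheory Real

noncomputable section

/-- Japanese bracket ⟨ω⟩ = (1 + ω²)^{1/2}. -/
def jb (ω : ℝ) : ℝ := Real.sqrt (1 + ω ^ 2)

/-- n⁰¹(ω) = ⟨ω⟩^{-M/2}. -/
def n01 (M : ℝ) (ω : ℝ) : ℝ := jb ω ^ (-(M / 2))

/-- The operator C₂₁²³⁴, with ω₂ = ω₃ + ω₄ − ω₁. -/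
def C21op (β : ℝ) (k l m : ℝ → ℝ) (ω₁ : ℝ) : ℝ :=
  64 * π ^ 3 * ω₁ ^ (β - 1/2) *
    ∫ ω₃ in (0:ℝ)..(ω₁ / 2), ∫ ω₄ in (ω₁ - ω₃)..ω₁,
      (ω₃ + ω₄ - ω₁) ^ (β + 1/2) * ω₃ ^ β * ω₄ ^ β *
        (k (ω₃ + ω₄ - ω₁) * l ω₃ * m ω₄)

/-- The operator C₂₂²³⁴, with ω₂ = ω₃ + ω₄ − ω₁. -/
def C22op (β : ℝ) (k l m : ℝ → ℝ) (ω₁ : ℝ) : ℝ :=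
  64 * π ^ 3 * ω₁ ^ (β - 1/2) *
    ∫ ω₃ in (ω₁ / 2)..ω₁, ∫ ω₄ in ω₃..ω₁,
      (ω₃ + ω₄ - ω₁) ^ (β + 1/2) * ω₃ ^ β * ω₄ ^ β *
        (k (ω₃ + ω₄ - ω₁) * l ω₃ * m ω₄)

/-- The operator C₃²³⁴, with ω₂ = ω₃ + ω₄ − ω₁. -/
def C3op (β : ℝ) (k l m : ℝ → ℝ) (ω₁ : ℝ) : ℝ :=
  64 * π ^ 3 * ω₁ ^ (β - 1/2) *
    ∫ ω₃ in (0:ℝ)..ω₁, ∫ ω₄ in Set.Ioi ω₁,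
      (ω₃ + ω₄ - ω₁) ^ β * ω₃ ^ (β + 1/2) * ω₄ ^ β *
        (k (ω₃ + ω₄ - ω₁) * l ω₃ * m ω₄)

/-- The operator C₁²³⁴, with ω₂ = ω₃ + ω₄ − ω₁. -/
def C1op (β : ℝ) (k l m : ℝ → ℝ) (ω₁ : ℝ) : ℝ :=
  64 * π ^ 3 * ω₁ ^ β *
    ∫ ω₃ in Set.Ioi ω₁, ∫ ω₄ in Set.Ioi ω₃,
      (ω₃ + ω₄ - ω₁) ^ β * ω₃ ^ β * ω₄ ^ β *
        (k (ω₃ + ω₄ - ω₁) * l ω₃ * m ω₄)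

/-- The full domain of integration {0 ≤ ω₃ ≤ ω₄, ω₃ + ω₄ ≥ ω₁} ⊂ ℝ². -/
def Dom (ω₁ : ℝ) : Set (ℝ × ℝ) := {p | 0 ≤ p.1 ∧ p.1 ≤ p.2 ∧ ω₁ ≤ p.1 + p.2}

/-- The cross-section factor min{√ω₁, √ω₂, √ω₃}, with ω₂ = ω₃ + ω₄ − ω₁,
where p = (ω₃, ω₄). -/
def crossMin (ω₁ : ℝ) (p : ℝ × ℝ) : ℝ :=
  min (Real.sqrt ω₁) (min (Real.sqrt (p.1 + p.2 - ω₁)) (Real.sqrt p.1))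

/-- The operator C^{j₁j₂j₃}[k,l,m](ω₁) where the factor is k(ω_{j₁}) l(ω_{j₂}) m(ω_{j₃}),
with ω₂ = ω₃ + ω₄ − ω₁ and p = (ω₃, ω₄); here the selection of frequencies is passed
as a function `sel : (ℝ × ℝ) → ℝ × ℝ × ℝ` giving (ω_{j₁}, ω_{j₂}, ω_{j₃}). -/
def Cfull (β : ℝ) (k l m : ℝ → ℝ) (sel : ℝ → ℝ × ℝ → ℝ × ℝ × ℝ) (ω₁ : ℝ) : ℝ :=
  64 * π ^ 3 * ω₁ ^ (β - 1/2) *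
    ∫ p in Dom ω₁,
      ((p.1 + p.2 - ω₁) * p.1 * p.2) ^ β * crossMin ω₁ p *
        (k (sel ω₁ p).1 * l (sel ω₁ p).2.1 * m (sel ω₁ p).2.2)

/-- C²³⁴[k,l,m](ω₁): integrand k(ω₂) l(ω₃) m(ω₄). -/
def C234 (β : ℝ) (k l m : ℝ → ℝ) : ℝ → ℝ :=
  Cfull β k l m (fun ω₁ p => (p.1 + p.2 - ω₁, p.1, p.2))

/-- C¹²⁴[k,l,m](ω₁): integrand k(ω₁) l(ω₂) m(ω₄). -/
def C124 (β : ℝ) (k l m : ℝ → ℝ) : ℝ → ℝ :=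
  Cfull β k l m (fun ω₁ p => (ω₁, p.1 + p.2 - ω₁, p.2))

/-- C¹³⁴[k,l,m](ω₁): integrand k(ω₁) l(ω₃) m(ω₄). -/
def C134 (β : ℝ) (k l m : ℝ → ℝ) : ℝ → ℝ :=
  Cfull β k l m (fun ω₁ p => (ω₁, p.1, p.2))

/-- C¹²³[k,l,m](ω₁): integrand k(ω₁) l(ω₂) m(ω₃). -/
def C123 (β : ℝ) (k l m : ℝ → ℝ) : ℝ → ℝ :=
  Cfull β k l m (fun ω₁ p => (ω₁, p.1 + p.2 - ω₁, p.1))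

/-!
Write `g(x) = x^{β+1/2} n⁰¹(x)`. Since `x ≤ ⟨x⟩`, each weighted profile satisfies
`x^c n⁰¹(x) ≤ min 1 (x^{c - M/2})` for `0 ≤ c ≤ M/2`. Hence the integrand of `C₃²³⁴` is at most
`g(ω₃) ω₄^{β - M/2}` (the `ω₂`-factor is bounded by `1`), the `ω₄`-tail over `(ω₁, ∞)` contributes
`ω₁^{β + 1 - M/2} / (M/2 - β - 1)`, and `∫₀^{ω₁} g ≤ 1 + 1/(M/2 - β - 3/2)` uniformly in `ω₁ ≥ 1`,
splitting at `1`. Both exponents are integrable at infinity because `M > 6 ≥ 2β + 4`.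
-/

open Set

lemma jb_pos (ω : ℝ) : 0 < jb ω :=
  Real.sqrt_pos.2 (by positivity)

lemma one_le_jb (ω : ℝ) : 1 ≤ jb ω :=
  Real.one_le_sqrt.2 (by nlinarith [sq_nonneg ω])

lemma le_jb (ω : ℝ) : ω ≤ jb ω :=
  Real.le_sqrt_of_sq_le (by linarith)

lemma continuous_n01 (M : ℝ) : Continuous (n01 M) :=
  (Real.continuous_sqrt.comp (by fun_prop)).rpow_const fun ω => Or.inl (jb_pos ω).ne'

lemma n01_nonneg (M ω : ℝ) : 0 ≤ n01 M ω :=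
  Real.rpow_nonneg (jb_pos ω).le _

lemma rpow_mul_n01_le_one {M c x : ℝ} (hc : 0 ≤ c) (hcM : c ≤ M / 2) (hx : 0 ≤ x) :
    x ^ c * n01 M x ≤ 1 :=
  calc x ^ c * n01 M x ≤ jb x ^ c * jb x ^ (-(M / 2)) :=
        mul_le_mul_of_nonneg_right (Real.rpow_le_rpow hx (le_jb x) hc) (n01_nonneg M x)
    _ = jb x ^ (c - M / 2) := by rw [← Real.rpow_add (jb_pos x), sub_eq_add_neg]
    _ ≤ 1 := Real.rpow_le_one_of_one_le_of_nonpos (one_le_jb x) (by linarith)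

lemma rpow_mul_n01_le_rpow {M c x : ℝ} (hM : 0 ≤ M) (hx : 0 < x) :
    x ^ c * n01 M x ≤ x ^ (c - M / 2) :=
  calc x ^ c * n01 M x ≤ x ^ c * x ^ (-(M / 2)) :=
        mul_le_mul_of_nonneg_left
          (Real.rpow_le_rpow_of_nonpos hx (le_jb x) (by linarith)) (Real.rpow_nonneg hx.le _)
    _ = x ^ (c - M / 2) := by rw [← Real.rpow_add hx, sub_eq_add_neg]

lemma continuous_rpow_mul_n01 {M c : ℝ} (hc : 0 ≤ c) : Continuous fun x : ℝ => x ^ c * n01 M x :=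
  (continuous_id.rpow_const fun _ => Or.inr hc).mul (continuous_n01 M)

lemma integral_rpow_mul_n01_le {M c a : ℝ} (hc : 0 ≤ c) (hcM : c - M / 2 < -1) (ha : 1 ≤ a) :
    ∫ x in (0 : ℝ)..a, x ^ c * n01 M x ≤ 1 + 1 / (M / 2 - c - 1) := by
  have hint : ∀ u v : ℝ, IntervalIntegrable (fun x => x ^ c * n01 M x) volume u v := fun u v =>
    (continuous_rpow_mul_n01 hc).intervalIntegrable u v
  have hnear : ∫ x in (0 : ℝ)..1, x ^ c * n01 M x ≤ 1 :=
    calc ∫ x in (0 : ℝ)..1, x ^ c * n01 M x ≤ ∫ _ in (0 : ℝ)..1, (1 : ℝ) :=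
          intervalIntegral.integral_mono_on zero_le_one (hint 0 1) intervalIntegrable_const
            fun x hx => rpow_mul_n01_le_one hc (by linarith) hx.1
      _ = 1 := by simp
  have hfar : ∫ x in (1 : ℝ)..a, x ^ c * n01 M x ≤ 1 / (M / 2 - c - 1) := by
    have h0 : (0 : ℝ) ∉ uIcc 1 a := by simp [uIcc_of_le ha]
    calc ∫ x in (1 : ℝ)..a, x ^ c * n01 M x ≤ ∫ x in (1 : ℝ)..a, x ^ (c - M / 2) :=
          intervalIntegral.integral_mono_on ha (hint 1 a)
            (intervalIntegral.intervalIntegrable_rpow (Or.inr h0))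
            fun x hx => rpow_mul_n01_le_rpow (by linarith) (by linarith [hx.1])
      _ = (1 - a ^ (c - M / 2 + 1)) / (M / 2 - c - 1) := by
          rw [integral_rpow (Or.inr ⟨by linarith, h0⟩), Real.one_rpow, ← neg_div_neg_eq]
          ring_nf
      _ ≤ 1 / (M / 2 - c - 1) := by
          gcongr
          · linarith
          · linarith [Real.rpow_nonneg (zero_le_one.trans ha) (c - M / 2 + 1)]
  linarith [intervalIntegral.integral_add_adjacent_intervals (hint 0 1) (hint 1 a)]

def c3Integrand (β : ℝ) (k l m : ℝ → ℝ) (ω₁ ω₃ ω₄ : ℝ) : ℝ :=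
  (ω₃ + ω₄ - ω₁) ^ β * ω₃ ^ (β + 1/2) * ω₄ ^ β * (k (ω₃ + ω₄ - ω₁) * l ω₃ * m ω₄)

lemma C3op_eq (β : ℝ) (k l m : ℝ → ℝ) (ω₁ : ℝ) :
    C3op β k l m ω₁ = 64 * π ^ 3 * ω₁ ^ (β - 1/2) *
      ∫ ω₃ in (0 : ℝ)..ω₁, ∫ ω₄ in Ioi ω₁, c3Integrand β k l m ω₁ ω₃ ω₄ :=
  rfl

section n01

variable {β M ω₁ ω₃ ω₄ : ℝ}

lemma c3Integrand_n01_nonneg (h₃ : 0 ≤ ω₃) (h₄ : 0 ≤ ω₄) (h₂ : ω₁ ≤ ω₃ + ω₄) :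
    0 ≤ c3Integrand β (n01 M) (n01 M) (n01 M) ω₁ ω₃ ω₄ := by
  unfold c3Integrand
  have h := n01_nonneg M
  have := Real.rpow_nonneg (sub_nonneg.2 h₂) β
  have := Real.rpow_nonneg h₃ (β + 1/2)
  have := Real.rpow_nonneg h₄ β
  exact mul_nonneg (by positivity) (mul_nonneg (mul_nonneg (h _) (h _)) (h _))

lemma c3Integrand_n01_le (hβ : 0 ≤ β) (hβM : β ≤ M / 2) (h₃ : 0 ≤ ω₃) (h₄ : 0 < ω₄)
    (h₂ : ω₁ ≤ ω₃ + ω₄) :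
    c3Integrand β (n01 M) (n01 M) (n01 M) ω₁ ω₃ ω₄ ≤
      ω₃ ^ (β + 1/2) * n01 M ω₃ * ω₄ ^ (β - M / 2) := by
  have hω₂ : (ω₃ + ω₄ - ω₁) ^ β * n01 M (ω₃ + ω₄ - ω₁) ≤ 1 :=
    rpow_mul_n01_le_one hβ hβM (sub_nonneg.2 h₂)
  have hω₄ : ω₄ ^ β * n01 M ω₄ ≤ ω₄ ^ (β - M / 2) := rpow_mul_n01_le_rpow (by linarith) h₄
  have hω₃ : 0 ≤ ω₃ ^ (β + 1/2) * n01 M ω₃ :=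
    mul_nonneg (Real.rpow_nonneg h₃ _) (n01_nonneg M ω₃)
  calc c3Integrand β (n01 M) (n01 M) (n01 M) ω₁ ω₃ ω₄
      = (ω₃ + ω₄ - ω₁) ^ β * n01 M (ω₃ + ω₄ - ω₁) *
          (ω₃ ^ (β + 1/2) * n01 M ω₃ * (ω₄ ^ β * n01 M ω₄)) := by
        unfold c3Integrand; ring
    _ ≤ 1 * (ω₃ ^ (β + 1/2) * n01 M ω₃ * ω₄ ^ (β - M / 2)) :=
        mul_le_mul hω₂ (mul_le_mul_of_nonneg_left hω₄ hω₃)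
          (mul_nonneg hω₃ (mul_nonneg (Real.rpow_nonneg h₄.le _) (n01_nonneg M ω₄))) zero_le_one
    _ = ω₃ ^ (β + 1/2) * n01 M ω₃ * ω₄ ^ (β - M / 2) := one_mul _

lemma integral_Ioi_c3Integrand_n01_le (hβ : 0 ≤ β) (hβM : β - M / 2 < -1) (hω₁ : 0 < ω₁)
    (h₃ : 0 ≤ ω₃) :
    ∫ ω₄ in Ioi ω₁, c3Integrand β (n01 M) (n01 M) (n01 M) ω₁ ω₃ ω₄ ≤
      ω₃ ^ (β + 1/2) * n01 M ω₃ * (ω₁ ^ (β + 1 - M / 2) / (M / 2 - β - 1)) := by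
  have htail : ∫ x in Ioi ω₁, x ^ (β - M / 2) = ω₁ ^ (β + 1 - M / 2) / (M / 2 - β - 1) := by
    rw [integral_Ioi_rpow_of_lt hβM hω₁, ← neg_div_neg_eq]
    ring_nf
  rw [← htail, ← integral_const_mul]
  refine integral_mono_of_nonneg ?_ ((integrableOn_Ioi_rpow_of_lt hβM hω₁).const_mul _) ?_ <;>
    filter_upwards [self_mem_ae_restrict measurableSet_Ioi] with ω₄ (hω₄ : ω₁ < ω₄)
  · exact c3Integrand_n01_nonneg h₃ (by linarith) (by linarith)
  · exact c3Integrand_n01_le hβ (by linarith) h₃ (by linarith) (by linarith)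

lemma integral_c3Integrand_n01_le (hβ : 0 ≤ β) (hβM : β + 1/2 - M / 2 < -1) (hω₁ : 1 ≤ ω₁) :
    ∫ ω₃ in (0 : ℝ)..ω₁, ∫ ω₄ in Ioi ω₁, c3Integrand β (n01 M) (n01 M) (n01 M) ω₁ ω₃ ω₄ ≤
      ω₁ ^ (β + 1 - M / 2) / (M / 2 - β - 1) * (1 + 1 / (M / 2 - (β + 1/2) - 1)) := by
  set K := ω₁ ^ (β + 1 - M / 2) / (M / 2 - β - 1)
  have hK : 0 ≤ K := div_nonneg (Real.rpow_nonneg (by linarith) _) (by linarith)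
  have hcont := continuous_rpow_mul_n01 (M := M) (c := β + 1/2) (by linarith)
  calc ∫ ω₃ in (0 : ℝ)..ω₁, ∫ ω₄ in Ioi ω₁, c3Integrand β (n01 M) (n01 M) (n01 M) ω₁ ω₃ ω₄
      ≤ ∫ ω₃ in (0 : ℝ)..ω₁, K * (ω₃ ^ (β + 1/2) * n01 M ω₃) := by
        simp only [intervalIntegral.integral_of_le (zero_le_one.trans hω₁)]
        refine integral_mono_of_nonneg ?_
          ((hcont.integrableOn_Icc.mono_set Ioc_subset_Icc_self).const_mul K) ?_ <;>
          filter_upwards [self_mem_ae_restrict measurableSet_Ioc] with ω₃ hω₃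
        · exact setIntegral_nonneg measurableSet_Ioi fun ω₄ hω₄ =>
            c3Integrand_n01_nonneg hω₃.1.le (by linarith [hω₃.1, mem_Ioi.1 hω₄])
              (by linarith [hω₃.1, mem_Ioi.1 hω₄])
        · exact (integral_Ioi_c3Integrand_n01_le hβ (by linarith) (by linarith) hω₃.1.le).trans_eq
            (mul_comm _ _)
    _ = K * ∫ ω₃ in (0 : ℝ)..ω₁, ω₃ ^ (β + 1/2) * n01 M ω₃ := intervalIntegral.integral_const_mul _ _
    _ ≤ K * (1 + 1 / (M / 2 - (β + 1/2) - 1)) :=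
        mul_le_mul_of_nonneg_left (integral_rpow_mul_n01_le (by linarith) hβM hω₁) hK

end n01

/-- Upper bound: C₃²³⁴[n⁰¹,n⁰¹,n⁰¹](ω₁) ≲ ω₁^{2β + 1/2 − M/2} for ω₁ > 1. -/
theorem C3_upper_bound (β M : ℝ) (hβ0 : 0 ≤ β) (hβ1 : β ≤ 1) (hM : 6 < M) :
    ∃ C : ℝ, 0 < C ∧ ∀ ω₁ : ℝ, 1 < ω₁ →
      C3op β (n01 M) (n01 M) (n01 M) ω₁ ≤ C * ω₁ ^ (2 * β + 1/2 - M / 2) := by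
  have hdecay : 0 < M / 2 - (β + 1/2) - 1 := by linarith
  have hweight : 0 < 1 + 1 / (M / 2 - (β + 1/2) - 1) := by positivity
  refine ⟨64 * π ^ 3 * (1 + 1 / (M / 2 - (β + 1/2) - 1)) / (M / 2 - β - 1),
    div_pos (by positivity) (by linarith), fun ω₁ hω₁ => ?_⟩
  have hω₀ : 0 < ω₁ := by linarith
  calc C3op β (n01 M) (n01 M) (n01 M) ω₁
      ≤ 64 * π ^ 3 * ω₁ ^ (β - 1/2) *
          (ω₁ ^ (β + 1 - M / 2) / (M / 2 - β - 1) * (1 + 1 / (M / 2 - (β + 1/2) - 1))) := by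
        rw [C3op_eq]
        exact mul_le_mul_of_nonneg_left (integral_c3Integrand_n01_le hβ0 (by linarith) hω₁.le)
          (by positivity)
    _ = 64 * π ^ 3 * (1 + 1 / (M / 2 - (β + 1/2) - 1)) / (M / 2 - β - 1) *
          (ω₁ ^ (β - 1/2) * ω₁ ^ (β + 1 - M / 2)) := by ring
    _ = 64 * π ^ 3 * (1 + 1 / (M / 2 - (β + 1/2) - 1)) / (M / 2 - β - 1) *
          ω₁ ^ (2 * β + 1/2 - M / 2) := by
        rw [← Real.rpow_add hω₀]
        ring_nf
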